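/- arXiv:2008.10321 — 3 statements merged into one kernel-verified Lean document; each statement's English description precedes it below -/
import Mathlib

section
/- For any constant matrix A ∈ ℝ^{n×n}, any k ∈ [1,n], and any t ∈ ℝ, exp(A^{[k]} t) = (exp(At))^{(k)}; i.e., the matrix exponential of the k-th additive compound of A equals the k-th multiplicative compound of the matrix exponential of A. (For k = n this reduces to the Abel–Jacobi–Liouville identity det(exp(At)) = exp(tr(A)t).) -/
open Matrix Set Filter
open scoped ENNReal

noncomputable section

/-- Increasing `k`-element subsets of `Fin n` (row/column index type of compounds). -/
abbrev IdxK (n k : ℕ) := {s : Finset (Fin n) // s.card = k}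

/-- The `k`-th multiplicative compound of a matrix: the matrix of all `k × k` minors,
indexed by `k`-element subsets of row/column indices (ordered increasingly). -/
noncomputable def mulCompound {n m : ℕ} (k : ℕ) (A : Matrix (Fin n) (Fin m) ℝ) :
    Matrix (IdxK n k) (IdxK m k) ℝ := fun κ lam =>
  (Matrix.of fun i j : Fin k =>
    A (κ.1.orderIsoOfFin κ.2 i).1 (lam.1.orderIsoOfFin lam.2 j).1).det

/-- The `k`-th additive compound: derivative at `ε = 0` of `ε ↦ (I + εA)^{(k)}`. -/
noncomputable def addCompound {n : ℕ} (k : ℕ) (A : Matrix (Fin n) (Fin n) ℝ) :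
    Matrix (IdxK n k) (IdxK n k) ℝ := fun κ lam =>
  deriv (fun ε : ℝ => mulCompound k ((1 : Matrix (Fin n) (Fin n) ℝ) + ε • A) κ lam) 0

/-- Wedge product of `k` vectors in `ℝ^n`, as the `k`-th multiplicative compound of the
`n × k` matrix whose columns are the given vectors. -/
noncomputable def wedge {n k : ℕ} (u : Fin k → (Fin n → ℝ)) : IdxK n k → ℝ := fun κ =>
  mulCompound k (Matrix.of fun i j => u j i) κ ⟨Finset.univ, by simp⟩

/-- `N` is a norm on `ι → ℝ`. -/
structure IsNorm {ι : Type*} [Fintype ι] (N : (ι → ℝ) → ℝ) : Prop where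
  nonneg : ∀ x, 0 ≤ N x
  eq_zero_iff : ∀ x, N x = 0 ↔ x = 0
  triangle : ∀ x y, N (x + y) ≤ N x + N y
  homog : ∀ (c : ℝ) (x), N (c • x) = |c| * N x

/-- Operator norm of a matrix induced by the vector norm `N`. -/
noncomputable def inducedNorm {ι : Type*} [Fintype ι] (N : (ι → ℝ) → ℝ)
    (M : Matrix ι ι ℝ) : ℝ :=
  sSup {c : ℝ | ∃ x : ι → ℝ, N x = 1 ∧ c = N (M.mulVec x)}

/-- Matrix measure (logarithmic norm) induced by the vector norm `N`:
`μ(M) = lim_{ε→0⁺} (‖I + εM‖ - 1)/ε`, i.e. the one-sided derivative at `0`. -/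
noncomputable def matMeasure {ι : Type*} [Fintype ι] [DecidableEq ι] (N : (ι → ℝ) → ℝ)
    (M : Matrix ι ι ℝ) : ℝ :=
  derivWithin (fun ε : ℝ => inducedNorm N ((1 : Matrix ι ι ℝ) + ε • M)) (Set.Ici 0) 0

/-- The `L_p` norm on `ι → ℝ` for `p ∈ [1,∞]` (`p = ⊤` is the sup norm). -/
noncomputable def lpnorm {ι : Type*} [Fintype ι] (p : ℝ≥0∞) (x : ι → ℝ) : ℝ :=
  if p = ⊤ then ⨆ i, |x i| else (∑ i, |x i| ^ p.toReal) ^ (1 / p.toReal)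


/-! By Cauchy–Binet, `u ↦ (exp (u • A))^{(k)}` is a one-parameter group of matrices. At `u = 0`
the curves `exp (u • A)` and `1 + u • A` agree to first order, and minors are smooth functions of
the entries, so the generator of this group is `A^{[k]}`. A one-parameter group that is
differentiable at `0` is the exponential of its generator. -/

namespace IdxK

variable {n k : ℕ}

def orderEmb (s : IdxK n k) : Fin k ↪o Fin n := s.1.orderEmbOfFin s.2

theorem range_orderEmb_comp (s : IdxK n k) (σ : Equiv.Perm (Fin k)) :
    Set.range (s.orderEmb ∘ σ) = s.1 := by
  rw [Set.range_comp, σ.range_eq_univ, Set.image_univ]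
  exact Finset.range_orderEmbOfFin _ _

theorem eq_and_eq_of_orderEmb_comp_eq {s₁ s₂ : IdxK n k} {σ₁ σ₂ : Equiv.Perm (Fin k)}
    (h : s₁.orderEmb ∘ σ₁ = s₂.orderEmb ∘ σ₂) : s₁ = s₂ ∧ σ₁ = σ₂ := by
  obtain rfl : s₁ = s₂ := Subtype.ext <| Finset.coe_injective <| by
    rw [← range_orderEmb_comp s₁ σ₁, ← range_orderEmb_comp s₂ σ₂, h]
  exact ⟨rfl, Equiv.ext fun i => s₁.orderEmb.injective (congrFun h i)⟩

theorem exists_eq_orderEmb_comp {r : Fin k → Fin n} (hr : Function.Injective r) :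
    ∃ (s : IdxK n k) (σ : Equiv.Perm (Fin k)), r = s.orderEmb ∘ σ := by
  let s : IdxK n k := ⟨Finset.univ.image r, by simp [Finset.card_image_of_injective _ hr]⟩
  have hmem : ∀ i, r i ∈ Set.range s.orderEmb := fun i => by
    rw [orderEmb, Finset.range_orderEmbOfFin]; simp [s]
  choose τ hτ using hmem
  have hτinj : Function.Injective τ := fun i j h => hr (by rw [← hτ i, ← hτ j, h])
  exact ⟨s, Equiv.ofBijective τ hτinj.bijective_of_finite, funext fun i => (hτ i).symm⟩

theorem sum_injective_eq_sum_sum_perm {M : Type*} [AddCommMonoid M] (g : (Fin k → Fin n) → M) :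
    ∑ r : Fin k → Fin n with Function.Injective r, g r =
      ∑ s : IdxK n k, ∑ σ : Equiv.Perm (Fin k), g (s.orderEmb ∘ σ) := by
  rw [← Fintype.sum_prod_type']
  symm
  refine Finset.sum_bij (fun p _ => p.1.orderEmb ∘ p.2) (fun p _ => ?_) (fun p _ q _ h => ?_)
    (fun r hr => ?_) (fun _ _ => rfl)
  · simpa using p.1.orderEmb.injective.comp p.2.injective
  · obtain ⟨h₁, h₂⟩ := eq_and_eq_of_orderEmb_comp_eq h
    exact Prod.ext h₁ h₂
  · obtain ⟨s, σ, rfl⟩ := exists_eq_orderEmb_comp (Finset.mem_filter.1 hr).2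
    exact ⟨(s, σ), Finset.mem_univ _, rfl⟩

theorem exists_forall_orderEmb_ne {κ ν : IdxK n k} (h : κ ≠ ν) :
    ∃ i, ∀ j, κ.orderEmb i ≠ ν.orderEmb j := by
  have hsub : ¬ κ.1 ⊆ ν.1 := fun hsub =>
    h (Subtype.ext (Finset.eq_of_subset_of_card_le hsub (by rw [κ.2, ν.2])))
  obtain ⟨x, hxκ, hxν⟩ := Finset.not_subset.1 hsub
  rw [← Finset.mem_coe, ← Finset.range_orderEmbOfFin _ κ.2] at hxκ
  obtain ⟨i, rfl⟩ := hxκ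
  exact ⟨i, fun j hj => hxν (hj ▸ Finset.orderEmbOfFin_mem _ _ j)⟩

end IdxK

section CauchyBinet

variable {R : Type*} [CommRing R] {m ι : Type*} [Fintype m] [DecidableEq m] {n k : ℕ}

theorem Matrix.det_mul_eq_sum_prod_mul_det_submatrix [Fintype ι] (M : Matrix m ι R)
    (N : Matrix ι m R) :
    (M * N).det = ∑ r : m → ι, (∏ i, M i (r i)) * (N.submatrix r id).det := by
  have hrows : (M * N).det = Matrix.detRowAlternating fun i => ∑ l, M i l • (N l : m → R) :=
    congrArg Matrix.det (by ext i j; simp [Matrix.mul_apply])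
  rw [hrows]
  refine (Matrix.detRowAlternating.toMultilinearMap.map_sum
    fun i l => M i l • (N l : m → R)).trans (Finset.sum_congr rfl fun r _ => ?_)
  rw [← smul_eq_mul]
  exact Matrix.detRowAlternating.toMultilinearMap.map_smul_univ (fun i => M i (r i))
    fun i => (N (r i) : m → R)

theorem Matrix.sum_perm_prod_mul_det_submatrix (M : Matrix m ι R) (N : Matrix ι m R) (e : m → ι) :
    ∑ σ : Equiv.Perm m, (∏ i, M i (e (σ i))) * (N.submatrix (e ∘ σ) id).det =
      (M.submatrix id e).det * (N.submatrix e id).det := by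
  have hperm (σ : Equiv.Perm m) :
      (N.submatrix (e ∘ σ) id).det = Equiv.Perm.sign σ * (N.submatrix e id).det := by
    rw [← Matrix.det_permute, Matrix.submatrix_submatrix]; rfl
  simp_rw [hperm, ← Matrix.det_transpose (M.submatrix id e), Matrix.det_apply', Finset.sum_mul]
  refine Finset.sum_congr rfl fun σ _ => ?_
  simp only [Matrix.transpose_apply, Matrix.submatrix_apply, id]
  ring

theorem Matrix.det_mul_eq_sum_det_submatrix (M : Matrix (Fin k) (Fin n) R)
    (N : Matrix (Fin n) (Fin k) R) :
    (M * N).det =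
      ∑ s : IdxK n k, (M.submatrix id s.orderEmb).det * (N.submatrix s.orderEmb id).det := by
  have hvanish (r : Fin k → Fin n) (hr : ¬ Function.Injective r) :
      (∏ i, M i (r i)) * (N.submatrix r id).det = 0 := by
    obtain ⟨i, j, hij, hne⟩ := Function.not_injective_iff.1 hr
    rw [Matrix.det_zero_of_row_eq hne (by ext; simp [hij]), mul_zero]
  rw [Matrix.det_mul_eq_sum_prod_mul_det_submatrix, ← Finset.sum_filter_of_ne fun r _ =>
    not_imp_comm.1 (hvanish r), IdxK.sum_injective_eq_sum_sum_perm]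
  exact Finset.sum_congr rfl fun s _ => Matrix.sum_perm_prod_mul_det_submatrix M N s.orderEmb

end CauchyBinet

section MulCompound

variable {n m p k : ℕ}

theorem mulCompound_apply (A : Matrix (Fin n) (Fin m) ℝ) (κ : IdxK n k) (ν : IdxK m k) :
    mulCompound k A κ ν = (A.submatrix κ.orderEmb ν.orderEmb).det := rfl

theorem mulCompound_mul (A : Matrix (Fin n) (Fin m) ℝ) (B : Matrix (Fin m) (Fin p) ℝ) :
    mulCompound k (A * B) = mulCompound k A * mulCompound k B := by
  ext κ ν
  rw [mulCompound_apply, Matrix.submatrix_mul _ _ _ id _ Function.bijective_id,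
    Matrix.det_mul_eq_sum_det_submatrix, Matrix.mul_apply]
  rfl

theorem mulCompound_one : mulCompound k (1 : Matrix (Fin n) (Fin n) ℝ) = 1 := by
  ext κ ν
  rw [mulCompound_apply]
  rcases eq_or_ne κ ν with rfl | h
  · rw [Matrix.submatrix_one _ κ.orderEmb.injective, Matrix.det_one, Matrix.one_apply_eq]
  · obtain ⟨i, hi⟩ := IdxK.exists_forall_orderEmb_ne h
    rw [Matrix.det_eq_zero_of_row_eq_zero i fun j => by
        rw [Matrix.submatrix_apply, Matrix.one_apply_ne (hi j)],
      Matrix.one_apply_ne h]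

end MulCompound

open NormedSpace in
theorem eq_exp_smul_of_map_add {𝕂 𝔸 : Type*} [RCLike 𝕂] [NormedRing 𝔸] [NormedAlgebra 𝕂 𝔸]
    [CompleteSpace 𝔸] {f : 𝕂 → 𝔸} {B : 𝔸} (map_add : ∀ s t, f (s + t) = f s * f t)
    (map_zero : f 0 = 1) (hB : HasDerivAt f B 0) (t : 𝕂) : f t = exp (t • B) := by
  have hf : ∀ s, HasDerivAt f (f s * B) s := by
    intro s
    have hB' : HasDerivAt f B (s - s) := by rwa [sub_self]
    simpa [← map_add] using (hB'.comp_sub_const s s).const_mul (f s)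
  have hconst : ∀ s, f s * exp (s • -B) = 1 := by
    have hderiv : ∀ u, HasDerivAt (fun u => f u * exp (u • -B)) 0 u := fun u => by
      simpa [mul_assoc] using (hf u).fun_mul (hasDerivAt_exp_smul_const' (-B) u)
    intro s
    simpa [map_zero] using is_const_of_deriv_eq_zero
      (fun u => (hderiv u).differentiableAt) (fun u => (hderiv u).deriv) s 0
  let +nondep : NormedAlgebra ℚ 𝔸 := .restrictScalars ℚ 𝕂 𝔸
  calc f t = f t * exp (t • -B) * exp (t • B) := by
        rw [mul_assoc,
          ← exp_add_of_commute ((Commute.refl B).neg_left.smul_left t |>.smul_right t)]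
        simp
    _ = exp (t • B) := by rw [hconst, one_mul]

theorem hasDerivAt_comp_of_tangent {𝕜 E F : Type*} [NontriviallyNormedField 𝕜]
    [NormedAddCommGroup E] [NormedSpace 𝕜 E] [NormedAddCommGroup F] [NormedSpace 𝕜 F]
    {Φ : E → F} {p q : 𝕜 → E} {v : E} {x : 𝕜} (hΦ : DifferentiableAt 𝕜 Φ (q x))
    (hp : HasDerivAt p v x) (hq : HasDerivAt q v x) (hpq : p x = q x) :
    HasDerivAt (Φ ∘ p) (deriv (Φ ∘ q) x) x := by
  rw [(hΦ.hasFDerivAt.comp_hasDerivAt x hq).deriv, ← hpq]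
  exact (hpq ▸ hΦ).hasFDerivAt.comp_hasDerivAt x hp

theorem Matrix.differentiable_det_of {𝕜 ι : Type*} [NontriviallyNormedField 𝕜] [Fintype ι]
    [DecidableEq ι] : Differentiable 𝕜 fun M : ι → ι → 𝕜 => (Matrix.of M).det := by
  simp only [Matrix.det_apply, Matrix.of_apply]
  fun_prop

theorem Matrix.hasDerivAt_iff_forall_apply {𝕜 m n : Type*} [NontriviallyNormedField 𝕜]
    [Fintype m] [Fintype n] {f : 𝕜 → Matrix m n 𝕜} {f' : Matrix m n 𝕜} {t : 𝕜} :
    HasDerivAt f f' t ↔ ∀ i j, HasDerivAt (fun u => f u i j) (f' i j) t :=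
  hasDerivAt_pi.trans (forall_congr' fun _ => hasDerivAt_pi)

theorem Matrix.hasDerivAt_exp_smul_apply {ι : Type*} [Fintype ι] [DecidableEq ι]
    (A : Matrix ι ι ℝ) (t : ℝ) (i j : ι) :
    HasDerivAt (fun u : ℝ => NormedSpace.exp (u • A) i j)
      ((NormedSpace.exp (t • A) * A) i j) t :=
  letI := Matrix.linftyOpNormedRing (n := ι) (α := ℝ)
  letI := Matrix.linftyOpNormedAlgebra (n := ι) (R := ℝ) (α := ℝ)
  Matrix.hasDerivAt_iff_forall_apply.1 (hasDerivAt_exp_smul_const A t) i j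

section ExpCompound

open NormedSpace

variable {n k : ℕ}

theorem mulCompound_exp_add_smul (A : Matrix (Fin n) (Fin n) ℝ) (s t : ℝ) :
    mulCompound k (exp ((s + t) • A)) =
      mulCompound k (exp (s • A)) * mulCompound k (exp (t • A)) := by
  rw [add_smul, Matrix.exp_add_of_commute _ _ ((Commute.refl A).smul_left s |>.smul_right t),
    mulCompound_mul]

theorem hasDerivAt_mulCompound_exp_smul_apply_zero (A : Matrix (Fin n) (Fin n) ℝ) (κ ν : IdxK n k) :
    HasDerivAt (fun u : ℝ => mulCompound k (exp (u • A)) κ ν) (addCompound k A κ ν) 0 := by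
  have hexp : HasDerivAt (fun (u : ℝ) i j => exp (u • A) (κ.orderEmb i) (ν.orderEmb j))
      (fun i j => A (κ.orderEmb i) (ν.orderEmb j)) 0 :=
    hasDerivAt_pi.2 fun i => hasDerivAt_pi.2 fun j => by
      simpa using Matrix.hasDerivAt_exp_smul_apply A 0 (κ.orderEmb i) (ν.orderEmb j)
  have hlin : HasDerivAt (fun (u : ℝ) i j => (1 + u • A) (κ.orderEmb i) (ν.orderEmb j))
      (fun i j => A (κ.orderEmb i) (ν.orderEmb j)) 0 :=
    hasDerivAt_pi.2 fun i => hasDerivAt_pi.2 fun j => by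
      simpa using ((hasDerivAt_id (0 : ℝ)).mul_const (A (κ.orderEmb i) (ν.orderEmb j))).const_add
        ((1 : Matrix (Fin n) (Fin n) ℝ) (κ.orderEmb i) (ν.orderEmb j))
  exact hasDerivAt_comp_of_tangent (Φ := fun M : Fin k → Fin k → ℝ => (Matrix.of M).det)
    (Matrix.differentiable_det_of _) hexp hlin (by simp)

theorem hasDerivAt_mulCompound_exp_smul_zero (A : Matrix (Fin n) (Fin n) ℝ) :
    HasDerivAt (fun u : ℝ => mulCompound k (exp (u • A))) (addCompound k A) 0 :=
  Matrix.hasDerivAt_iff_forall_apply.2 (hasDerivAt_mulCompound_exp_smul_apply_zero A)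

end ExpCompound

theorem exp_addCompound_general {n : ℕ} (k : ℕ)
    (A : Matrix (Fin n) (Fin n) ℝ) (t : ℝ) :
    NormedSpace.exp (t • addCompound k A) = mulCompound k (NormedSpace.exp (t • A)) := by
  -- Any submultiplicative norm inducing the product topology will do; `exp` and `HasDerivAt`
  -- only depend on the topology.
  let := Matrix.linftyOpNormedRing (n := IdxK n k) (α := ℝ)
  let := Matrix.linftyOpNormedAlgebra (n := IdxK n k) (R := ℝ) (α := ℝ)
  refine (eq_exp_smul_of_map_add (𝔸 := Matrix (IdxK n k) (IdxK n k) ℝ)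
    (mulCompound_exp_add_smul A) ?_
    (hasDerivAt_mulCompound_exp_smul_zero A) t).symm
  rw [zero_smul, NormedSpace.exp_zero, mulCompound_one]

/-- `exp(A^{[k]} t) = (exp(At))^{(k)}` for any constant `A ∈ ℝ^{n×n}`,
`k ∈ [1,n]` and `t ∈ ℝ`. -/
theorem exp_addCompound {n : ℕ} (k : ℕ) (hk : 1 ≤ k) (hkn : k ≤ n)
    (A : Matrix (Fin n) (Fin n) ℝ) (t : ℝ) :
    NormedSpace.exp (t • addCompound k A) = mulCompound k (NormedSpace.exp (t • A)) :=
  exp_addCompound_general k A t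

end
end

section
/- Let D : ℝ_+ → ℝ^{n×n} be continuous with D(t) diagonal for every t, and suppose there exist k ∈ [1,n] and η > 0 such that for every t ≥ 0, the sum of every k diagonal entries of D(t) is ≤ −η. Then the LTV system ẋ(t) = D(t)x(t) is k-order contractive with respect to the L_s norm for every s ∈ {1, 2, ∞}: for any a^1, …, a^k ∈ ℝ^n and all t ≥ 0, | x(t,a^1) ∧ ⋯ ∧ x(t,a^k) |_s ≤ e^{−ηt} | a^1 ∧ ⋯ ∧ a^k |_s, where x(t,a) is the solution with x(0) = a. -/
open Matrix Set Filter
open scoped ENNReal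

noncomputable section

/-!
Each coordinate of the wedge product is a `k × k` minor of `[x¹ … xᵏ]`. For diagonal `D(t)`
every row of the solution matrix evolves independently, `ẋᵢ = Dᵢᵢ xᵢ`, so each term of the
Leibniz expansion of the minor with row set `κ`, and hence the minor itself, satisfies the
scalar equation `ẏ = (∑_{l ∈ κ} D_{ll}) y` with rate `≤ -η`. Each coordinate therefore decays
like `e^{-ηt}`, and any `L_s` norm inherits a coordinatewise bound.
-/

theorem abs_le_exp_mul_abs_of_hasDerivWithinAt_mul {y c : ℝ → ℝ} {η : ℝ}
    (hy : ∀ t ∈ Ici (0 : ℝ), HasDerivWithinAt y (c t * y t) (Ici 0) t)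
    (hc : ∀ t ∈ Ici (0 : ℝ), c t ≤ -η) {t : ℝ} (ht : t ∈ Ici (0 : ℝ)) :
    |y t| ≤ Real.exp (-η * t) * |y 0| := by
  have hanti : AntitoneOn (fun t => y t ^ 2 * Real.exp (2 * η * t)) (Ici 0) := by
    refine antitoneOn_of_hasDerivWithinAt_nonpos (convex_Ici 0)
      (f' := fun t => 2 * (c t + η) * (y t ^ 2 * Real.exp (2 * η * t))) ?_ ?_ ?_
    · have hyc : ContinuousOn y (Ici 0) := fun t ht => (hy t ht).continuousWithinAt
      fun_prop
    · intro u hu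
      have hu₀ : u ∈ Ici (0 : ℝ) := interior_subset hu
      have hexp := ((hasDerivWithinAt_id u (Ici 0)).const_mul (2 * η)).exp
      refine ((((hy u hu₀).fun_pow 2).mul hexp).mono interior_subset).congr_deriv ?_
      simp only [id]
      ring
    · intro u hu
      have hcu : c u + η ≤ 0 := by linarith [hc u (interior_subset hu)]
      have : 0 ≤ y u ^ 2 * Real.exp (2 * η * u) := by positivity
      nlinarith
  have hdecay : y t ^ 2 * Real.exp (2 * η * t) ≤ y 0 ^ 2 := by
    simpa using hanti self_mem_Ici ht ht
  have hexp : Real.exp (2 * η * t) * Real.exp (-η * t) ^ 2 = 1 := by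
    rw [← Real.exp_nat_mul, ← Real.exp_add]
    ring_nf
    exact Real.exp_zero
  rw [← sq_le_sq₀ (abs_nonneg _) (by positivity), mul_pow, sq_abs, sq_abs]
  calc y t ^ 2 = y t ^ 2 * Real.exp (2 * η * t) * Real.exp (-η * t) ^ 2 := by
        rw [mul_assoc, hexp, mul_one]
    _ ≤ y 0 ^ 2 * Real.exp (-η * t) ^ 2 := by gcongr
    _ = Real.exp (-η * t) ^ 2 * y 0 ^ 2 := mul_comm _ _

theorem lpnorm_le_mul_of_abs_le {ι : Type*} [Fintype ι] {p : ℝ≥0∞} (hp : p ≠ 0) {r : ℝ}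
    (hr : 0 ≤ r) {u v : ι → ℝ} (h : ∀ i, |u i| ≤ r * |v i|) :
    lpnorm p u ≤ r * lpnorm p v := by
  by_cases hp_top : p = ⊤
  · simp only [lpnorm, if_pos hp_top]
    rcases isEmpty_or_nonempty ι with hι | hι
    · simp
    refine ciSup_le fun i => (h i).trans (mul_le_mul_of_nonneg_left ?_ hr)
    exact le_ciSup (Finite.bddAbove_range fun i => |v i|) i
  simp only [lpnorm, if_neg hp_top]
  set q := p.toReal
  have hq : 0 < q := ENNReal.toReal_pos hp hp_top
  calc (∑ i, |u i| ^ q) ^ (1 / q)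
      ≤ (∑ i, (r * |v i|) ^ q) ^ (1 / q) := by
        gcongr with i
        exact h i
    _ = (r ^ q * ∑ i, |v i| ^ q) ^ (1 / q) := by
        simp only [Finset.mul_sum, Real.mul_rpow hr (abs_nonneg _)]
    _ = r * (∑ i, |v i| ^ q) ^ (1 / q) := by
        rw [Real.mul_rpow (by positivity) (by positivity), ← Real.rpow_mul hr,
          mul_one_div_cancel hq.ne', Real.rpow_one]

theorem hasDerivWithinAt_finsetProd_of_eq_mul {ι : Type*} {u : Finset ι} {f : ι → ℝ → ℝ}
    {c : ι → ℝ} {s : Set ℝ} {t : ℝ} (hf : ∀ i ∈ u, HasDerivWithinAt (f i) (c i * f i t) s t) :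
    HasDerivWithinAt (fun τ => ∏ i ∈ u, f i τ) ((∑ i ∈ u, c i) * ∏ i ∈ u, f i t) s t := by
  classical
  refine (HasDerivWithinAt.fun_finsetProd hf).congr_deriv ?_
  rw [Finset.sum_mul]
  refine Finset.sum_congr rfl fun i hi => ?_
  rw [smul_eq_mul, ← Finset.mul_prod_erase u _ hi]
  ring

theorem hasDerivWithinAt_wedge_apply_of_diagonal {n k : ℕ} (d : Fin n → ℝ)
    {x : Fin k → ℝ → Fin n → ℝ} {s : Set ℝ} {t : ℝ}
    (hx : ∀ i, HasDerivWithinAt (x i) (diagonal d *ᵥ x i t) s t) (κ : IdxK n k) :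
    HasDerivWithinAt (fun τ => wedge (fun i => x i τ) κ)
      ((∑ l ∈ κ.1, d l) * wedge (fun i => x i t) κ) s t := by
  set ρ : Fin k → Fin n := fun i => κ.1.orderIsoOfFin κ.2 i
  set e : Fin k → Fin k := fun j =>
    (Finset.univ : Finset (Fin k)).orderIsoOfFin (Finset.card_fin k) j
  have hleibniz : ∀ τ, wedge (fun i => x i τ) κ =
      ∑ σ : Equiv.Perm (Fin k), ((Equiv.Perm.sign σ : ℤ) : ℝ) * ∏ i, x (e i) τ (ρ (σ i)) :=
    fun τ => by rw [wedge, mulCompound, det_apply']; rfl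
  have hrate : ∀ σ : Equiv.Perm (Fin k), ∑ l ∈ κ.1, d l = ∑ i, d (ρ (σ i)) := fun σ => by
    rw [Equiv.sum_comp σ (fun i => d (ρ i)), ← Finset.sum_coe_sort κ.1 d]
    exact (Equiv.sum_comp (κ.1.orderIsoOfFin κ.2).toEquiv _).symm
  have hterm : ∀ σ : Equiv.Perm (Fin k), HasDerivWithinAt (fun τ => ∏ i, x (e i) τ (ρ (σ i)))
      ((∑ l ∈ κ.1, d l) * ∏ i, x (e i) t (ρ (σ i))) s t := fun σ => by
    rw [hrate σ]
    refine hasDerivWithinAt_finsetProd_of_eq_mul fun i _ => ?_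
    simpa [mulVec_diagonal] using hasDerivWithinAt_pi.1 (hx (e i)) (ρ (σ i))
  simp only [hleibniz, Finset.mul_sum, mul_left_comm _ ((Equiv.Perm.sign _ : ℤ) : ℝ)]
  exact HasDerivWithinAt.fun_sum fun σ _ => (hterm σ).const_mul _

theorem diagonal_k_contraction_general {n : ℕ} (k : ℕ)
    (D : ℝ → Matrix (Fin n) (Fin n) ℝ)
    (hdiag : ∀ t ∈ Set.Ici (0 : ℝ), ∀ i j : Fin n, i ≠ j → D t i j = 0)
    (η : ℝ)
    (hsum : ∀ t ∈ Set.Ici (0 : ℝ), ∀ s : Finset (Fin n), s.card = k →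
      ∑ i ∈ s, D t i i ≤ -η)
    (s : ℝ≥0∞) (hs : s = 1 ∨ s = 2 ∨ s = ⊤)
    (a : Fin k → (Fin n → ℝ)) (x : Fin k → ℝ → (Fin n → ℝ))
    (hx0 : ∀ i, x i 0 = a i)
    (hx : ∀ i, ∀ t ∈ Set.Ici (0 : ℝ),
      HasDerivWithinAt (x i) ((D t).mulVec (x i t)) (Set.Ici 0) t) :
    ∀ t ∈ Set.Ici (0 : ℝ),
      lpnorm s (wedge fun i => x i t) ≤ Real.exp (-η * t) * lpnorm s (wedge a) := by
  intro t ht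
  have hwedge (κ : IdxK n k) :
      |wedge (fun i => x i t) κ| ≤ Real.exp (-η * t) * |wedge a κ| := by
    have hderiv (τ : ℝ) (hτ : τ ∈ Ici (0 : ℝ)) : HasDerivWithinAt
        (fun r => wedge (fun i => x i r) κ)
        ((∑ l ∈ κ.1, D τ l l) * wedge (fun i => x i τ) κ) (Ici 0) τ := by
      refine hasDerivWithinAt_wedge_apply_of_diagonal (D τ).diag (fun i => ?_) κ
      rw [(show (D τ).IsDiag from fun i j => hdiag τ hτ i j).diagonal_diag]
      exact hx i τ hτ
    simpa only [hx0] using abs_le_exp_mul_abs_of_hasDerivWithinAt_mul hderiv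
      (fun τ hτ => hsum τ hτ κ.1 κ.2) ht
  have hs₀ : s ≠ 0 := by rcases hs with rfl | rfl | rfl <;> simp
  exact lpnorm_le_mul_of_abs_le hs₀ (Real.exp_pos _).le hwedge

/-- if `D(t)` is diagonal and the sum of every `k` of its diagonal entries
is `≤ -η < 0` for all `t ≥ 0`, then `ẋ = D(t)x` is k-order contractive w.r.t. the `L_s`
norm for every `s ∈ {1,2,∞}`. -/
theorem diagonal_k_contraction {n : ℕ} (k : ℕ) (hk : 1 ≤ k) (hkn : k ≤ n)
    (D : ℝ → Matrix (Fin n) (Fin n) ℝ)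
    (hcont : ∀ i j : Fin n, ContinuousOn (fun t => D t i j) (Set.Ici 0))
    (hdiag : ∀ t ∈ Set.Ici (0 : ℝ), ∀ i j : Fin n, i ≠ j → D t i j = 0)
    (η : ℝ) (hη : 0 < η)
    (hsum : ∀ t ∈ Set.Ici (0 : ℝ), ∀ s : Finset (Fin n), s.card = k →
      ∑ i ∈ s, D t i i ≤ -η)
    (s : ℝ≥0∞) (hs : s = 1 ∨ s = 2 ∨ s = ⊤)
    (a : Fin k → (Fin n → ℝ)) (x : Fin k → ℝ → (Fin n → ℝ))
    (hx0 : ∀ i, x i 0 = a i)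
    (hx : ∀ i, ∀ t ∈ Set.Ici (0 : ℝ),
      HasDerivWithinAt (x i) ((D t).mulVec (x i t)) (Set.Ici 0) t) :
    ∀ t ∈ Set.Ici (0 : ℝ),
      lpnorm s (wedge fun i => x i t) ≤ Real.exp (-η * t) * lpnorm s (wedge a) :=
  diagonal_k_contraction_general k D hdiag η hsum s hs a x hx0 hx

end
end

section
/- Let A ∈ ℝ^{n×n} and let B := tr(A)·I − A^T. For any M ∈ ℝ^{n×n}, let M̃ denote the matrix with entries m̃_{ij} := (−1)^{i+j} m_{n+1−i, n+1−j} for i, j ∈ [1,n]. Then the (n−1)-th additive compound of A satisfies A^{[n−1]} = B̃. -/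
open Matrix Set Filter
open scoped ENNReal

noncomputable section

/-!
Deleting row `a` and column `b` of `I + εA` leaves, up to the sign `(-1)^(a+b)`, the `(b, a)` entry
of `adj (I + εA)`. Over `ℝ[X]`, comparing coefficients of `X` in `adj M * M = det M • 1` for
`M = I + X A` gives `d/dε adj (I + εA) |₀ = tr A • I - A`, because `adj I = I` and the linear
coefficient of `det (I + X A)` is `tr A`. Finally `i ↦ i.rev` preserves the parity of `i + j`.
-/

namespace Matrix

open Polynomial

variable {ι R : Type*} [Fintype ι] [DecidableEq ι] [CommRing R]

theorem eval_adjugate_one_add_X_smul (M : Matrix ι ι R) (r : R) (i j : ι) :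
    (adjugate (1 + (X : R[X]) • M.map C) i j).eval r = adjugate (1 + r • M) i j := by
  have h : (evalRingHom r).mapMatrix (1 + (X : R[X]) • M.map C) = 1 + r • M := by
    rw [map_add, map_one]
    ext p q
    simp only [RingHom.mapMatrix_apply, coe_evalRingHom, add_apply, map_apply, smul_apply,
      smul_eq_mul, X_mul_C, eval_mul, eval_C, eval_X, add_right_inj]
    exact mul_comm _ _
  rw [← h, ← RingHom.map_adjugate]
  rfl

theorem coeff_adjugate_one_add_X_smul_zero (M : Matrix ι ι R) (i j : ι) :
    (adjugate (1 + (X : R[X]) • M.map C) i j).coeff 0 = (1 : Matrix ι ι R) i j := by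
  rw [coeff_zero_eq_eval_zero, eval_adjugate_one_add_X_smul, zero_smul, add_zero, adjugate_one]

theorem coeff_adjugate_one_add_X_smul_one (M : Matrix ι ι R) (i j : ι) :
    (adjugate (1 + (X : R[X]) • M.map C) i j).coeff 1 = (M.trace • 1 - M) i j := by
  have h := congr_arg (coeff · 1) (congr_fun₂ (adjugate_mul (1 + (X : R[X]) • M.map C)) i j)
  rw [Matrix.mul_add, Matrix.mul_one, Matrix.mul_smul] at h
  simp only [add_apply, smul_apply, smul_eq_mul, coeff_add, coeff_X_mul, mul_apply,
    finsetSum_coeff, coeff_mul_C, map_apply, coeff_adjugate_one_add_X_smul_zero] at h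
  rw [← mul_apply, Matrix.one_mul] at h
  rw [sub_apply, eq_sub_iff_add_eq, h]
  obtain rfl | hij := eq_or_ne i j
  · simp [coeff_det_one_add_X_smul_one]
  · simp [one_apply_ne hij]

theorem hasDerivAt_adjugate_one_add_smul {𝕜 : Type*} [NontriviallyNormedField 𝕜]
    (M : Matrix ι ι 𝕜) (i j : ι) :
    HasDerivAt (fun ε : 𝕜 => adjugate (1 + ε • M) i j) ((M.trace • 1 - M) i j) 0 := by
  have h := Polynomial.hasDerivAt (adjugate (1 + (X : 𝕜[X]) • M.map C) i j) 0
  simp only [← coeff_zero_eq_eval_zero, coeff_derivative, Nat.cast_zero, zero_add, mul_one,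
    coeff_adjugate_one_add_X_smul_one] at h
  simpa only [eval_adjugate_one_add_X_smul] using h

end Matrix

theorem Fin.coe_orderIsoOfFin_univ_erase {m : ℕ} (a : Fin (m + 1))
    (h : (Finset.univ.erase a).card = m) (p : Fin m) :
    ((Finset.univ.erase a).orderIsoOfFin h p : Fin (m + 1)) = a.succAbove p := by
  rw [Finset.coe_orderIsoOfFin_apply]
  exact (congrFun (Finset.orderEmbOfFin_unique h
    (fun x => Finset.mem_erase.2 ⟨Fin.succAbove_ne a x, Finset.mem_univ _⟩)
    (Fin.strictMono_succAbove a)) p).symm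

theorem Fin.neg_one_pow_val_rev_add_val_rev {R : Type*} [Ring R] {n : ℕ} (i j : Fin n) :
    (-1 : R) ^ ((i.rev : ℕ) + j.rev) = (-1) ^ ((i : ℕ) + j) := by
  rw [neg_one_pow_eq_pow_mod_two, neg_one_pow_eq_pow_mod_two (i + j : ℕ), Fin.val_rev,
    Fin.val_rev]
  congr 1
  omega

theorem mulCompound_univ_erase {m k : ℕ} (M : Matrix (Fin (m + 1)) (Fin (m + 1)) ℝ)
    (a b : Fin (m + 1)) (ha : (Finset.univ.erase a).card = k)
    (hb : (Finset.univ.erase b).card = k) :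
    mulCompound k M ⟨_, ha⟩ ⟨_, hb⟩ = (-1) ^ ((a : ℕ) + b) * adjugate M b a := by
  obtain rfl : m = k := by simpa using ha
  rw [adjugate_fin_succ_eq_det_submatrix, ← mul_assoc, ← pow_add, Even.neg_one_pow ⟨_, rfl⟩,
    one_mul]
  simp only [mulCompound, Fin.coe_orderIsoOfFin_univ_erase]
  rfl

/-- Schwarz: `A^{[n-1]} = B̃` where `B = tr(A)·I - Aᵀ` and
`m̃_{ij} = (-1)^{i+j} m_{n+1-i,n+1-j}`. Here the `(n-1)`-subsets are identified with
`Fin n` via the lexicographic order: the `i`-th subset is `univ.erase i.rev`. -/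
theorem addCompound_pred {n : ℕ} (A : Matrix (Fin n) (Fin n) ℝ)
    (B : Matrix (Fin n) (Fin n) ℝ)
    (hB : B = A.trace • (1 : Matrix (Fin n) (Fin n) ℝ) - Aᵀ)
    (Bt : Matrix (Fin n) (Fin n) ℝ)
    (hBt : ∀ i j : Fin n, Bt i j = (-1 : ℝ) ^ ((i : ℕ) + (j : ℕ)) * B i.rev j.rev) :
    ∀ i j : Fin n,
      addCompound (n - 1) A
        ⟨Finset.univ.erase i.rev, by
          rw [Finset.card_erase_of_mem (Finset.mem_univ _)]; simp⟩
        ⟨Finset.univ.erase j.rev, by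
          rw [Finset.card_erase_of_mem (Finset.mem_univ _)]; simp⟩
      = Bt i j := by
  intro i j
  obtain ⟨m, rfl⟩ := Nat.exists_eq_add_one_of_ne_zero i.pos.ne'
  rw [addCompound]
  simp_rw [mulCompound_univ_erase]
  rw [((hasDerivAt_adjugate_one_add_smul A j.rev i.rev).const_mul _).deriv, hBt, hB,
    Fin.neg_one_pow_val_rev_add_val_rev]
  simp [Matrix.one_apply, eq_comm]

end
end
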